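/- Let p, q be distinct positive integers with p ≡ q (mod 2). In the polynomial ring ℂ[c,h] in two variables c and h, the polynomial φ_{p,q} = h² − S(c)·h + P(c) is irreducible, where S(c) = ((p² + q² − 2)/16)·(1 − 2c/3) + (p − q)²/4 and P(c) = (1/256)·(2(p−q)² − (1 − 2c/3)(pq − p − q − 1))·(2(p−q)² − (1 − 2c/3)(pq + p + q + 1)). -/

import Mathlib

open MvPolynomial

/-- The polynomial `S(c) = ((p²+q²−2)/16)(1 − 2c/3) + (p−q)²/4` in `ℂ[c,h]`
(with `c = X 0`). -/
noncomputable def SPoly (p q : ℕ) : MvPolynomial (Fin 2) ℂ :=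
  C (((p : ℂ) ^ 2 + (q : ℂ) ^ 2 - 2) / 16) * (1 - C (2 / 3) * X 0) +
    C (((p : ℂ) - (q : ℂ)) ^ 2 / 4)

/-- The polynomial
`P(c) = (1/256)(2(p−q)² − (1 − 2c/3)(pq−p−q−1))(2(p−q)² − (1 − 2c/3)(pq+p+q+1))`
in `ℂ[c,h]` (with `c = X 0`). -/
noncomputable def PPoly (p q : ℕ) : MvPolynomial (Fin 2) ℂ :=
  C (1 / 256) *
    (C (2 * ((p : ℂ) - (q : ℂ)) ^ 2) -
      (1 - C (2 / 3) * X 0) * C ((p : ℂ) * q - p - q - 1)) *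
    (C (2 * ((p : ℂ) - (q : ℂ)) ^ 2) -
      (1 - C (2 / 3) * X 0) * C ((p : ℂ) * q + p + q + 1))

/-- The Kac polynomial `φ_{p,q} = h² − S(c)·h + P(c)` in `ℂ[c,h]`
(with `c = X 0` and `h = X 1`). -/
noncomputable def phiPQ (p q : ℕ) : MvPolynomial (Fin 2) ℂ :=
  (X 1) ^ 2 - SPoly p q * X 1 + PPoly p q
/-! As a monic quadratic in `h` over `ℂ[c]`, `φ_{p,q}` is reducible only if it has a root in
`ℂ[c]`, which makes its discriminant `S² − 4P` a square in `ℂ[c]`. Writing `t = 1 − 2c/3`, the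
discriminant equals `t · (α t + (p − q)²((p + q)² − 2)/32)` for some constant `α`, so for `p ≠ q`
it has a simple zero at `c = 3/2`; a square cannot have a simple zero. -/

open scoped Polynomial Polynomial.Bivariate

namespace Polynomial

theorem irreducible_X_sq_sub_C_mul_X_add_C_of_not_isSquare {R : Type*} [CommRing R] [IsDomain R]
    {b c : R} (h : ¬IsSquare (b ^ 2 - 4 * c)) : Irreducible (X ^ 2 - C b * X + C c) := by
  have hmonic : (X ^ 2 - C b * X + C c).Monic := by monicity!
  have hdeg : (X ^ 2 - C b * X + C c).natDegree = 2 := by compute_degree!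
  rw [hmonic.irreducible_iff_roots_eq_zero_of_degree_le_three (by omega) (by omega)]
  refine Multiset.eq_zero_of_forall_notMem fun r hr => h ⟨2 * r - b, ?_⟩
  have hroot : r ^ 2 - b * r + c = 0 := by simpa using (mem_roots hmonic.ne_zero).mp hr
  linear_combination (-4) * hroot

theorem not_isSquare_of_isRoot_of_eval_derivative_ne_zero {R : Type*} [CommRing R] [IsReduced R]
    {f : R[X]} {a : R} (hroot : f.IsRoot a) (hderiv : f.derivative.eval a ≠ 0) :
    ¬IsSquare f := by
  rintro ⟨g, rfl⟩
  have hg : g.eval a = 0 := IsReduced.eq_zero _ ⟨2, by simpa [sq] using hroot⟩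
  simp [derivative_mul, hg] at hderiv

section finTwoEquivBivariate

variable (R : Type*) [CommRing R]

noncomputable def finTwoEquivBivariate : MvPolynomial (Fin 2) R ≃ₐ[R] R[X][Y] :=
  AlgEquiv.ofAlgHom (MvPolynomial.aeval ![C X, Y])
    (aevalAeval (MvPolynomial.X 0) (MvPolynomial.X 1))
    (by ext <;> simp) (by ext i; fin_cases i <;> simp)

@[simp]
theorem finTwoEquivBivariate_X_zero : finTwoEquivBivariate R (MvPolynomial.X 0) = C X := by
  simp [finTwoEquivBivariate]

@[simp]
theorem finTwoEquivBivariate_X_one : finTwoEquivBivariate R (MvPolynomial.X 1) = Y := by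
  simp [finTwoEquivBivariate]

@[simp]
theorem finTwoEquivBivariate_C (r : R) :
    finTwoEquivBivariate R (MvPolynomial.C r) = C (C r) := by
  simp [finTwoEquivBivariate]

end finTwoEquivBivariate

end Polynomial

noncomputable def kacZeroSum (p q : ℕ) : ℂ[X] :=
  Polynomial.C (((p : ℂ) ^ 2 + (q : ℂ) ^ 2 - 2) / 16) *
      (1 - Polynomial.C (2 / 3) * Polynomial.X) +
    Polynomial.C (((p : ℂ) - (q : ℂ)) ^ 2 / 4)

noncomputable def kacZeroProd (p q : ℕ) : ℂ[X] :=
  Polynomial.C (1 / 256) *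
    (Polynomial.C (2 * ((p : ℂ) - (q : ℂ)) ^ 2) -
      (1 - Polynomial.C (2 / 3) * Polynomial.X) * Polynomial.C ((p : ℂ) * q - p - q - 1)) *
    (Polynomial.C (2 * ((p : ℂ) - (q : ℂ)) ^ 2) -
      (1 - Polynomial.C (2 / 3) * Polynomial.X) * Polynomial.C ((p : ℂ) * q + p + q + 1))

theorem finTwoEquivBivariate_phiPQ (p q : ℕ) :
    Polynomial.finTwoEquivBivariate ℂ (phiPQ p q) =
      Y ^ 2 - Polynomial.C (kacZeroSum p q) * Y + Polynomial.C (kacZeroProd p q) := by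
  simp only [phiPQ, SPoly, PPoly, kacZeroSum, kacZeroProd, map_add, map_sub, map_mul, map_pow,
    map_one, Polynomial.finTwoEquivBivariate_X_zero, Polynomial.finTwoEquivBivariate_X_one,
    Polynomial.finTwoEquivBivariate_C]

noncomputable def kacDiscriminant (p q : ℕ) : ℂ[X] :=
  kacZeroSum p q ^ 2 - 4 * kacZeroProd p q

theorem isRoot_kacDiscriminant (p q : ℕ) : (kacDiscriminant p q).IsRoot (3 / 2) := by
  simp only [kacDiscriminant, kacZeroSum, kacZeroProd, Polynomial.IsRoot.def,
    Polynomial.eval_sub, Polynomial.eval_add, Polynomial.eval_mul, Polynomial.eval_pow,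
    Polynomial.eval_C, Polynomial.eval_X, Polynomial.eval_one, Polynomial.eval_ofNat]
  ring

theorem eval_derivative_kacDiscriminant (p q : ℕ) :
    (kacDiscriminant p q).derivative.eval (3 / 2) =
      -((p : ℂ) - q) ^ 2 * (((p : ℂ) + q) ^ 2 - 2) / 48 := by
  simp only [kacDiscriminant, kacZeroSum, kacZeroProd, Polynomial.derivative_sub,
    Polynomial.derivative_add, Polynomial.derivative_mul, Polynomial.derivative_sq,
    Polynomial.derivative_C, Polynomial.derivative_X, Polynomial.derivative_one, Polynomial.derivative_ofNat,
    Polynomial.eval_sub, Polynomial.eval_add, Polynomial.eval_mul, Polynomial.eval_C,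
    Polynomial.eval_X, Polynomial.eval_one, Polynomial.eval_ofNat, Polynomial.eval_zero]
  ring

theorem eval_derivative_kacDiscriminant_ne_zero {p q : ℕ} (hpq : p ≠ q) :
    (kacDiscriminant p q).derivative.eval (3 / 2) ≠ 0 := by
  have hsub : (p : ℂ) - q ≠ 0 := sub_ne_zero.mpr (Nat.cast_injective.ne hpq)
  have hsq : ((p : ℂ) + q) ^ 2 - 2 ≠ 0 := by
    have : (p + q) ^ 2 ≠ 2 := fun h => by
      rcases Nat.lt_or_ge (p + q) 2 with h' | h' <;> nlinarith
    exact sub_ne_zero.mpr (by exact_mod_cast this)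
  rw [eval_derivative_kacDiscriminant]
  simp [hsub, hsq]

theorem phiPQ_irreducible_general (p q : ℕ) (hpq : p ≠ q) : Irreducible (phiPQ p q) := by
  rw [← MulEquiv.irreducible_iff (Polynomial.finTwoEquivBivariate ℂ), finTwoEquivBivariate_phiPQ]
  exact Polynomial.irreducible_X_sq_sub_C_mul_X_add_C_of_not_isSquare <|
    Polynomial.not_isSquare_of_isRoot_of_eval_derivative_ne_zero (isRoot_kacDiscriminant p q)
      (eval_derivative_kacDiscriminant_ne_zero hpq)

/-- For distinct positive integers `p ≠ q` of the same parity, the polynomial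
`φ_{p,q} = h² − S(c)h + P(c)` is irreducible in `ℂ[c,h]`. -/
theorem phiPQ_irreducible (p q : ℕ) (hp : 0 < p) (hq : 0 < q) (hpq : p ≠ q)
    (hpar : p % 2 = q % 2) : Irreducible (phiPQ p q) :=
  phiPQ_irreducible_general p q hpq
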